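/- Let (X_n)_{n∈ℕ} be i.i.d. real random variables with common cumulative distribution function F_X, and let (E_n) be real random variables on the same probability space with E_n → 0 in probability as n → ∞. Then for every point of continuity υ of F_X, (1/n) Σ_{ℓ=1}^n 1{X_ℓ + E_n ≤ υ} → F_X(υ) in probability as n → ∞. -/

import Mathlib

open MeasureTheory ProbabilityTheory Filter

/-- Convergence in probability of a sequence of real random variables to a constant:
`P(|X_n - c| > ε) → 0` for every `ε > 0`. -/
def TendstoInProb {Ω : Type*} [MeasurableSpace Ω] (μ : Measure Ω)
    (X : ℕ → Ω → ℝ) (c : ℝ) : Prop :=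
  ∀ ε > (0 : ℝ), Tendsto (fun n => μ {ω | ε < |X n ω - c|}) atTop (nhds 0)

open Finset Topology

/-!
The perturbed empirical c.d.f. is the empirical c.d.f. `G_n` evaluated at the random point
`υ - E_n`. By the strong law of large numbers `G_n(t) → F(t)` at every fixed `t`, and `G_n` is
monotone, so on the event `|E_n| < δ` the perturbed value is squeezed between `G_n(υ - δ)` and
`G_n(υ + δ)`, which are eventually close to `F(υ ∓ δ)`, hence to `F(υ)` by continuity.
-/

theorem dist_apply_lt_of_monotone {g F : ℝ → ℝ} (hg : Monotone g) {x υ δ ε : ℝ}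
    (hx : dist x υ < δ) (hF_above : dist (F (υ + δ)) (F υ) < ε / 2)
    (hF_below : dist (F (υ - δ)) (F υ) < ε / 2) (hg_above : dist (g (υ + δ)) (F (υ + δ)) < ε / 2)
    (hg_below : dist (g (υ - δ)) (F (υ - δ)) < ε / 2) :
    dist (g x) (F υ) < ε := by
  rw [Real.dist_eq, abs_lt] at *
  have := hg (show x ≤ υ + δ by linarith)
  have := hg (show υ - δ ≤ x by linarith)
  constructor <;> linarith

section

variable {Ω : Type*} [MeasurableSpace Ω] {μ : Measure Ω}

theorem tendstoInProb_iff_tendstoInMeasure {X : ℕ → Ω → ℝ} {c : ℝ} :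
    TendstoInProb μ X c ↔ TendstoInMeasure μ X atTop (fun _ => c) := by
  simp only [tendstoInMeasure_iff_norm, Real.norm_eq_abs]
  refine ⟨fun h ε hε => ?_, fun h ε hε => ?_⟩
  · refine tendsto_of_tendsto_of_tendsto_of_le_of_le tendsto_const_nhds (h (ε / 2) (by positivity))
      (fun _ => zero_le) fun n => measure_mono fun ω (hω : ε ≤ _) => ?_
    change ε / 2 < _
    linarith
  · exact tendsto_of_tendsto_of_tendsto_of_le_of_le tendsto_const_nhds (h ε hε)
      (fun _ => zero_le) fun n => measure_mono fun ω (hω : ε < _) => hω.le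

theorem tendstoInMeasure_eval_of_monotone {ι : Type*} {l : Filter ι} {G : ι → ℝ → Ω → ℝ}
    (hG_mono : ∀ i ω, Monotone fun t => G i t ω) {F : ℝ → ℝ}
    (hGF : ∀ t, TendstoInMeasure μ (fun i => G i t) l fun _ => F t)
    {T : ι → Ω → ℝ} {υ : ℝ} (hT : TendstoInMeasure μ T l fun _ => υ)
    (hF : ContinuousAt F υ) :
    TendstoInMeasure μ (fun i ω => G i (T i ω) ω) l fun _ => F υ := by
  rw [tendstoInMeasure_iff_dist] at hT ⊢
  intro ε hε
  obtain ⟨δ, hδ, hFδ⟩ := Metric.continuousAt_iff.mp hF (ε / 2) (half_pos hε)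
  have hδ_dist : ‖δ / 2‖ < δ := by rw [Real.norm_of_nonneg (by positivity)]; linarith
  have hF_above := hFδ ((dist_self_add_left _ υ).trans_lt hδ_dist)
  have hF_below := hFδ ((dist_self_sub_left υ _).trans_lt hδ_dist)
  have hsub (i : ι) : {ω | ε ≤ dist (G i (T i ω) ω) (F υ)} ⊆
      {ω | δ / 2 ≤ dist (T i ω) υ} ∪ ({ω | ε / 2 ≤ dist (G i (υ + δ / 2) ω) (F (υ + δ / 2))} ∪
        {ω | ε / 2 ≤ dist (G i (υ - δ / 2) ω) (F (υ - δ / 2))}) := by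
    intro ω hω
    by_contra! h
    simp only [Set.mem_union, Set.mem_ofPred_eq, not_or, not_le] at h
    exact (dist_apply_lt_of_monotone (hG_mono i ω) h.1 hF_above hF_below h.2.1 h.2.2).not_ge hω
  have hbound (i : ι) : μ {ω | ε ≤ dist (G i (T i ω) ω) (F υ)} ≤
      μ {ω | δ / 2 ≤ dist (T i ω) υ} + (μ {ω | ε / 2 ≤ dist (G i (υ + δ / 2) ω) (F (υ + δ / 2))} +
        μ {ω | ε / 2 ≤ dist (G i (υ - δ / 2) ω) (F (υ - δ / 2))}) :=
    (measure_mono (hsub i)).trans <| (measure_union_le _ _).trans <|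
      add_le_add le_rfl (measure_union_le _ _)
  have hlim := (hT _ (half_pos hδ)).add
    ((tendstoInMeasure_iff_dist.mp (hGF (υ + δ / 2)) _ (half_pos hε)).add
      (tendstoInMeasure_iff_dist.mp (hGF (υ - δ / 2)) _ (half_pos hε)))
  simp only [add_zero] at hlim
  exact tendsto_of_tendsto_of_tendsto_of_le_of_le tendsto_const_nhds hlim (fun _ => zero_le) hbound

end

noncomputable def empiricalCDF {Ω : Type*} (X : ℕ → Ω → ℝ) (n : ℕ) (t : ℝ) (ω : Ω) : ℝ :=
  (n : ℝ)⁻¹ * ∑ ℓ ∈ range n, if X ℓ ω ≤ t then 1 else 0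

namespace empiricalCDF

variable {Ω : Type*} {X : ℕ → Ω → ℝ}

theorem monotone (n : ℕ) (ω : Ω) : Monotone fun t => empiricalCDF X n t ω := by
  intro s t hst
  refine mul_le_mul_of_nonneg_left (sum_le_sum fun ℓ _ => ?_) (by positivity)
  split_ifs with hs ht
  exacts [le_rfl, absurd (hs.trans hst) ht, zero_le_one, le_rfl]

variable [MeasurableSpace Ω] {μ : Measure Ω}

theorem measurable (hX : ∀ n, Measurable (X n)) (n : ℕ) (t : ℝ) :
    Measurable (empiricalCDF X n t) :=
  (Finset.measurable_sum _ fun ℓ _ => Measurable.ite (measurableSet_le (hX ℓ) measurable_const)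
    measurable_const measurable_const).const_mul _

theorem ae_tendsto [IsFiniteMeasure μ] (hX : ∀ n, Measurable (X n))
    (hindep : Pairwise fun i j => X i ⟂ᵢ[μ] X j) (hident : ∀ n, IdentDistrib (X n) (X 0) μ μ)
    (t : ℝ) :
    ∀ᵐ ω ∂μ, Tendsto (fun n => empiricalCDF X n t ω) atTop (𝓝 (μ {ω | X 0 ω ≤ t}).toReal) := by
  set f : ℝ → ℝ := fun x => if x ≤ t then 1 else 0
  have hf : Measurable f := Measurable.ite measurableSet_Iic measurable_const measurable_const
  have hf_X0 : f ∘ X 0 = {ω | X 0 ω ≤ t}.indicator 1 := by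
    ext ω; simp [f, Set.indicator_apply]
  have hmeas : MeasurableSet {ω | X 0 ω ≤ t} := measurableSet_le (hX 0) measurable_const
  have hlln := strong_law_ae_real (fun ℓ => f ∘ X ℓ)
    (hf_X0 ▸ (integrable_const 1).indicator hmeas)
    (fun i j hij => (hindep hij).comp hf hf) fun n => (hident n).comp hf
  rw [hf_X0, integral_indicator_one hmeas] at hlln
  filter_upwards [hlln] with ω hω
  simpa only [empiricalCDF, div_eq_inv_mul, Function.comp_apply, f, measureReal_def] using hω

theorem tendstoInMeasure [IsFiniteMeasure μ] (hX : ∀ n, Measurable (X n))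
    (hindep : Pairwise fun i j => X i ⟂ᵢ[μ] X j) (hident : ∀ n, IdentDistrib (X n) (X 0) μ μ)
    (t : ℝ) :
    TendstoInMeasure μ (fun n => empiricalCDF X n t) atTop fun _ => (μ {ω | X 0 ω ≤ t}).toReal :=
  tendstoInMeasure_of_tendsto_ae (fun n => (measurable hX n t).aestronglyMeasurable)
    (ae_tendsto hX hindep hident t)

end empiricalCDF

/-- let `(X_n)` be i.i.d. real random variables with common c.d.f.
`F`, and let `E_n → 0` in probability. Then for every continuity point `υ` of `F`,
the perturbed empirical c.d.f. `(1/n) Σ_{ℓ<n} 1{X_ℓ + E_n ≤ υ}` converges to `F(υ)`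
in probability. -/
theorem perturbed_ecdf_tendsto_inProb
    {Ω : Type*} [MeasurableSpace Ω] (μ : Measure Ω) [IsProbabilityMeasure μ]
    (X : ℕ → Ω → ℝ) (hXmeas : ∀ n, Measurable (X n))
    (hXindep : iIndepFun X μ)
    (hXident : ∀ n, μ.map (X n) = μ.map (X 0))
    (F : ℝ → ℝ) (hF : ∀ t, F t = (μ {ω | X 0 ω ≤ t}).toReal)
    (E : ℕ → Ω → ℝ) (hE : TendstoInProb μ E 0)
    (υ : ℝ) (hυ : ContinuousAt F υ) :
    TendstoInProb μ
      (fun n ω => ((n : ℝ))⁻¹ *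
        ∑ ℓ ∈ Finset.range n, if X ℓ ω + E n ω ≤ υ then (1 : ℝ) else 0)
      (F υ) := by
  have hecdf (t : ℝ) : TendstoInMeasure μ (fun n => empiricalCDF X n t) atTop fun _ => F t := by
    rw [hF]
    exact empiricalCDF.tendstoInMeasure hXmeas (fun i j hij => hXindep.indepFun hij)
      (fun n => ⟨(hXmeas n).aemeasurable, (hXmeas 0).aemeasurable, hXident n⟩) t
  have hT : TendstoInMeasure μ (fun n ω => υ - E n ω) atTop fun _ => υ := by
    rw [← tendstoInProb_iff_tendstoInMeasure]
    simpa only [TendstoInProb, sub_sub_cancel_left, abs_neg, sub_zero] using hE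
  rw [tendstoInProb_iff_tendstoInMeasure]
  simpa only [empiricalCDF, le_sub_iff_add_le] using
    tendstoInMeasure_eval_of_monotone empiricalCDF.monotone hecdf hT hυ
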